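/- arXiv:1509.06563 — 7 statements merged into one kernel-verified Lean document; each statement's English description precedes it below -/
import Mathlib

section
/- Let G be a graph with chromatic number more than 4N, and let M_1, ..., M_k be a partition of V(G) such that χ(G[M_i]) ≤ N for each i. Then there exist indices a < b < c < d < e ≤ k such that G contains an edge between M_a and M_c and an edge between M_a and M_e. -/
lemma greedy4 : ∀ (k : ℕ) (E : Fin k → Fin k → Prop),
    (∀ i : Fin k, ({j : Fin k | i < j ∧ E i j}).ncard ≤ 3) →
    ∃ g : Fin k → Fin 4, ∀ i j : Fin k, i < j → E i j → g i ≠ g j := by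
  intro k
  induction k with
  | zero => exact fun E _ => ⟨fun i => i.elim0, fun i => i.elim0⟩
  | succ k ih =>
    intro E h
    obtain ⟨g', hg'⟩ := ih (fun i j => E i.succ j.succ) (by
      intro i
      have himg : Fin.succ '' {j : Fin k | i < j ∧ E i.succ j.succ}
          ⊆ {j : Fin (k+1) | i.succ < j ∧ E i.succ j} := by
        rintro j ⟨j', ⟨h1, h2⟩, rfl⟩
        exact ⟨Fin.succ_lt_succ_iff.mpr h1, h2⟩
      calc ({j : Fin k | i < j ∧ E i.succ j.succ}).ncard
          = (Fin.succ '' {j : Fin k | i < j ∧ E i.succ j.succ}).ncard :=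
            (Set.ncard_image_of_injective _ (Fin.succ_injective k)).symm
        _ ≤ ({j : Fin (k+1) | i.succ < j ∧ E i.succ j}).ncard :=
            Set.ncard_le_ncard himg (Set.toFinite _)
        _ ≤ 3 := h i.succ)
    -- pick a color for 0
    set A : Set (Fin k) := {j | E 0 j.succ} with hA
    have hAcard : A.ncard ≤ 3 := by
      have himg : Fin.succ '' A ⊆ {j : Fin (k+1) | 0 < j ∧ E 0 j} := by
        rintro j ⟨j', hj', rfl⟩
        exact ⟨Fin.succ_pos _, hj'⟩
      calc A.ncard = (Fin.succ '' A).ncard :=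
            (Set.ncard_image_of_injective _ (Fin.succ_injective k)).symm
        _ ≤ ({j : Fin (k+1) | 0 < j ∧ E 0 j}).ncard :=
            Set.ncard_le_ncard himg (Set.toFinite _)
        _ ≤ 3 := h 0
    have hTcard : (g' '' A).ncard ≤ 3 :=
      le_trans (Set.ncard_image_le (Set.toFinite A)) hAcard
    have hex : ∃ c : Fin 4, c ∉ g' '' A := by
      by_contra hc
      push_neg at hc
      have : (g' '' A) = Set.univ := Set.eq_univ_of_forall hc
      rw [this, Set.ncard_univ] at hTcard
      simp at hTcard
    obtain ⟨c, hc⟩ := hex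
    refine ⟨Fin.cases c g', ?_⟩
    intro i j hij hE
    induction i using Fin.cases with
    | zero =>
      induction j using Fin.cases with
      | zero => exact absurd hij (lt_irrefl _)
      | succ j' =>
        simp only [Fin.cases_zero, Fin.cases_succ]
        intro heq
        exact hc ⟨j', hE, heq.symm⟩
    | succ i' =>
      induction j using Fin.cases with
      | zero => exact absurd hij (by simp [Fin.lt_def])
      | succ j' =>
        simp only [Fin.cases_succ]
        exact hg' i' j' (Fin.succ_lt_succ_iff.mp hij) hE

/-- if `χ(G) > 4N` and `V(G)` is partitioned into sets
`M 1, …, M k` each inducing a subgraph of chromatic number at most `N`,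
then there are indices `a < b < c < d < e` with an edge between `M a` and
`M c` and an edge between `M a` and `M e`. -/
theorem stmt_1 {V : Type*} [Fintype V] (G : SimpleGraph V) (N k : ℕ)
    (M : Fin k → Set V)
    (hpart : ∀ v : V, ∃! i : Fin k, v ∈ M i)
    (hχ : ∀ i : Fin k, (G.induce (M i)).chromaticNumber ≤ (N : ℕ∞))
    (hG : (4 * N : ℕ∞) < G.chromaticNumber) :
    ∃ a b c d e : Fin k, a < b ∧ b < c ∧ c < d ∧ d < e ∧
      (∃ u ∈ M a, ∃ w ∈ M c, G.Adj u w) ∧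
      (∃ u ∈ M a, ∃ w ∈ M e, G.Adj u w) := by
  by_contra hcon
  set E : Fin k → Fin k → Prop :=
    fun i j => ∃ u ∈ M i, ∃ w ∈ M j, G.Adj u w with hE
  have hkey : ∀ (i j j' : Fin k), i.val + 2 ≤ j.val → j.val + 2 ≤ j'.val →
      E i j → E i j' → False := by
    intro i j j' h1 h2 e1 e2
    have hb : i.val + 1 < k := by have := j.isLt; omega
    have hd : j.val + 1 < k := by have := j'.isLt; omega
    exact hcon ⟨i, ⟨i.val + 1, hb⟩, j, ⟨j.val + 1, hd⟩, j',
      (by simp [Fin.lt_def]), (by simp [Fin.lt_def]; omega),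
      (by simp [Fin.lt_def]), (by simp [Fin.lt_def]; omega), e1, e2⟩
  have hdeg : ∀ i : Fin k, ({j : Fin k | i < j ∧ E i j}).ncard ≤ 3 := by
    intro i
    set S' : Set (Fin k) := {j | i.val + 2 ≤ j.val ∧ E i j} with hS'
    have hsub : {j : Fin k | i < j ∧ E i j}
        ⊆ {j : Fin k | j.val = i.val + 1} ∪ S' := by
      intro j ⟨hlt, he⟩
      rw [Fin.lt_def] at hlt
      by_cases hcase : j.val = i.val + 1
      · exact Or.inl hcase
      · exact Or.inr ⟨by omega, he⟩
    have h1 : ({j : Fin k | j.val = i.val + 1}).ncard ≤ 1 := by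
      rw [Set.ncard_le_one (Set.toFinite _)]
      intro a ha b hb
      exact Fin.ext (ha.trans hb.symm)
    have h2 : S'.ncard ≤ 2 := by
      rcases Set.eq_empty_or_nonempty S' with he | hne
      · simp [he]
      · obtain ⟨j0, hj0, hmin⟩ := Set.exists_min_image S' id (Set.toFinite _) hne
        have hsub2 : S' ⊆ {j0} ∪ {j : Fin k | j.val = j0.val + 1} := by
          intro j hj
          have hle : j0 ≤ j := hmin j hj
          rw [Fin.le_def] at hle
          have hn1 : ¬ (j0.val + 2 ≤ j.val) := fun hh =>
            hkey i j0 j hj0.1 hh hj0.2 hj.2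
          by_cases hcc : j.val = j0.val
          · exact Or.inl (by simp [Fin.ext hcc])
          · exact Or.inr (by simp; omega)
        calc S'.ncard ≤ ({j0} ∪ {j : Fin k | j.val = j0.val + 1} : Set (Fin k)).ncard :=
              Set.ncard_le_ncard hsub2 (Set.toFinite _)
          _ ≤ ({j0} : Set (Fin k)).ncard + ({j : Fin k | j.val = j0.val + 1}).ncard :=
              Set.ncard_union_le _ _
          _ ≤ 1 + 1 := by
              refine add_le_add (le_of_eq (Set.ncard_singleton _)) ?_
              rw [Set.ncard_le_one (Set.toFinite _)]
              intro a ha b hb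
              exact Fin.ext (ha.trans hb.symm)
          _ = 2 := rfl
    calc ({j : Fin k | i < j ∧ E i j}).ncard
        ≤ ({j : Fin k | j.val = i.val + 1} ∪ S').ncard :=
          Set.ncard_le_ncard hsub (Set.toFinite _)
      _ ≤ ({j : Fin k | j.val = i.val + 1}).ncard + S'.ncard := Set.ncard_union_le _ _
      _ ≤ 1 + 2 := add_le_add h1 h2
      _ = 3 := rfl
  obtain ⟨g, hg⟩ := greedy4 k E hdeg
  -- colorings of the parts
  have hcolorable : ∀ i : Fin k, (G.induce (M i)).Colorable N := fun i =>
    (SimpleGraph.chromaticNumber_le_iff_colorable).mp (hχ i)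
  have col : ∀ i : Fin k, (G.induce (M i)).Coloring (Fin N) := fun i =>
    (hcolorable i).some
  have colcongr : ∀ (i j : Fin k), i = j → ∀ (x : V) (hxi : x ∈ M i) (hxj : x ∈ M j),
      col i ⟨x, hxi⟩ = col j ⟨x, hxj⟩ := by
    rintro i j rfl x hxi hxj; rfl
  set iOf : V → Fin k := fun v => (hpart v).choose with hiOf
  have hmem : ∀ v : V, v ∈ M (iOf v) := fun v => (hpart v).choose_spec.1
  set f : V → Fin 4 × Fin N :=
    fun v => (g (iOf v), col (iOf v) ⟨v, hmem v⟩) with hf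
  have hvalid : ∀ u w : V, G.Adj u w → f u ≠ f w := by
    intro u w hadj heq
    rw [Prod.ext_iff] at heq
    by_cases hcase : iOf u = iOf w
    · have hw2 : w ∈ M (iOf u) := hcase ▸ hmem w
      have h2 : col (iOf w) ⟨w, hmem w⟩ = col (iOf u) ⟨w, hw2⟩ :=
        colcongr _ _ hcase.symm w (hmem w) hw2
      have := heq.2
      simp only [hf] at this
      rw [h2] at this
      exact (col (iOf u)).valid (by exact hadj) this
    · rcases lt_or_gt_of_ne hcase with hlt | hgt
      · exact hg _ _ hlt ⟨u, hmem u, w, hmem w, hadj⟩ heq.1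
      · exact hg _ _ hgt ⟨w, hmem w, u, hmem u, hadj.symm⟩ heq.1.symm
  have C : G.Coloring (Fin 4 × Fin N) := SimpleGraph.Coloring.mk f (fun hadj => hvalid _ _ hadj)
  have hcol : G.Colorable (4 * N) := by
    have := C.colorable
    simpa using this
  have hle : G.chromaticNumber ≤ ((4 * N : ℕ) : ℕ∞) := hcol.chromaticNumber_le
  rw [Nat.cast_mul] at hle
  exact absurd hG (not_lt.mpr (by exact_mod_cast hle))
end

section
/- Let G be a triangle-free graph, let v be a vertex of G, and suppose that the subgraph of G induced on the set of vertices at distance exactly 2 from v has chromatic number greater than 2. Then G contains an induced cycle of length 5. -/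
/-!
Take an edge `xy` inside the second neighbourhood of `v` (there is one, since that graph is not
2-colourable), a common neighbour `a` of `v` and `x`, and a common neighbour `b` of `v` and `y`.
Then `v a x y b` is a 5-cycle, and it is induced: `v` is adjacent to neither `x` nor `y`, which are
at distance 2 from it, and each of the chords `ay`, `ab`, `xb` would close a triangle.
-/

/-- `G` has an induced cycle (hole) of length `n`: an injective map from
`ZMod n` to the vertices, with adjacency exactly between consecutive images. -/
def HasInducedCycle {V : Type*} (G : SimpleGraph V) (n : ℕ) : Prop :=
  ∃ f : ZMod n → V, Function.Injective f ∧
    ∀ i j : ZMod n, G.Adj (f i) (f j) ↔ (j = i + 1 ∨ i = j + 1)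

lemma ZMod.five_cases (k : ZMod 5) : k = 0 ∨ k = 1 ∨ k = 2 ∨ k = 3 ∨ k = 4 := by
  revert k; decide

namespace SimpleGraph

variable {V : Type*} {G : SimpleGraph V}

lemma CliqueFree.not_adj_of_adj_of_adj (h : G.CliqueFree 3) {u v w : V}
    (huv : G.Adj u v) (huw : G.Adj u w) : ¬ G.Adj v w :=
  fun hvw ↦ isIndepSet_neighborSet_of_triangleFree G h u huv huw hvw.ne hvw

lemma edist_eq_two_of_dist_eq_two {u v : V} (h : G.dist u v = 2) : G.edist u v = 2 := by
  rw [← (dist_ne_zero_iff_ne_and_reachable.1 (by omega)).2.coe_dist_eq_edist, h]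
  rfl

/-- Injectivity is automatic: `f i = f j` with `i ≠ j` would force both `j = i + 2` and
`j = i - 2`. -/
lemma hasInducedCycle_of_adj_iff {n : ℕ} (h4 : (4 : ZMod n) ≠ 0) (f : ZMod n → V)
    (hf : ∀ i j, G.Adj (f i) (f j) ↔ (j = i + 1 ∨ i = j + 1)) : HasInducedCycle G n := by
  refine ⟨f, fun i j hij ↦ ?_, hf⟩
  have hsucc := (hf j (i + 1)).1 (hij ▸ (hf i (i + 1)).2 (.inl rfl))
  have hpred := (hf j (i - 1)).1 (hij ▸ (hf i (i - 1)).2 (.inr (by ring)))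
  rcases hsucc with hsucc | hplus
  · exact add_right_cancel hsucc
  rcases hpred with hpred | hminus
  · exact absurd (by linear_combination -hpred - hplus) h4
  · linear_combination -hminus

lemma hasInducedCycle_five_of_adj (f : ZMod 5 → V) (hadj : ∀ i, G.Adj (f i) (f (i + 1)))
    (hchord : ∀ i, ¬ G.Adj (f i) (f (i + 2))) : HasInducedCycle G 5 := by
  refine hasInducedCycle_of_adj_iff (by decide) f fun i j ↦ ?_
  obtain ⟨k, rfl⟩ : ∃ k, j = i + k := ⟨j - i, by ring⟩
  have hwrap : ∀ a b : ZMod 5, a + b = 0 → i + a + b = i := fun a b h ↦ by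
    rw [add_assoc, h, add_zero]
  simp only [add_right_inj, add_assoc, left_eq_add]
  rcases ZMod.five_cases k with rfl | rfl | rfl | rfl | rfl
  · exact iff_of_false (by simp) (by decide)
  · exact iff_of_true (hadj i) (by decide)
  · exact iff_of_false (hchord i) (by decide)
  · refine iff_of_false (fun h ↦ hchord (i + 3) ?_) (by decide)
    rwa [hwrap 3 2 (by decide), G.adj_comm]
  · refine iff_of_true ?_ (by decide)
    simpa [hwrap 4 1 (by decide), G.adj_comm] using hadj (i + 4)

lemma hasInducedCycle_five {v₀ v₁ v₂ v₃ v₄ : V}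
    (h₀₁ : G.Adj v₀ v₁) (h₁₂ : G.Adj v₁ v₂) (h₂₃ : G.Adj v₂ v₃) (h₃₄ : G.Adj v₃ v₄)
    (h₄₀ : G.Adj v₄ v₀) (n₀₂ : ¬ G.Adj v₀ v₂) (n₀₃ : ¬ G.Adj v₀ v₃) (n₁₃ : ¬ G.Adj v₁ v₃)
    (n₁₄ : ¬ G.Adj v₁ v₄) (n₂₄ : ¬ G.Adj v₂ v₄) : HasInducedCycle G 5 := by
  refine hasInducedCycle_five_of_adj ![v₀, v₁, v₂, v₃, v₄] (fun i ↦ ?_) (fun i ↦ ?_) <;>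
    rcases ZMod.five_cases i with rfl | rfl | rfl | rfl | rfl
  exacts [h₀₁, h₁₂, h₂₃, h₃₄, h₄₀, n₀₂, n₁₃, n₂₄, fun h ↦ n₀₃ h.symm, fun h ↦ n₁₄ h.symm]

end SimpleGraph

open SimpleGraph in
/-- in a triangle-free graph, if the second neighbourhood of some
vertex induces a subgraph with chromatic number greater than 2, then the graph
contains an induced cycle of length 5. -/
theorem stmt_2 {V : Type*} (G : SimpleGraph V) (hTF : G.CliqueFree 3) (v : V)
    (h : (2 : ℕ∞) < (G.induce {u : V | G.dist v u = 2}).chromaticNumber) :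
    HasInducedCycle G 5 := by
  obtain ⟨⟨x, hx⟩, ⟨y, hy⟩, hxy : G.Adj x y⟩ :=
    ne_bot_iff_exists_adj.1 (two_le_chromaticNumber_iff_ne_bot.1 h.le)
  obtain ⟨-, hvx, a, hva, hxa⟩ := edist_eq_two_iff.1 (edist_eq_two_of_dist_eq_two hx)
  obtain ⟨-, hvy, b, hvb, hyb⟩ := edist_eq_two_iff.1 (edist_eq_two_of_dist_eq_two hy)
  exact hasInducedCycle_five hva hxa.symm hxy hyb hvb.symm hvx hvy
    (hTF.not_adj_of_adj_of_adj hxa hxy) (hTF.not_adj_of_adj_of_adj hva hvb)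
    (hTF.not_adj_of_adj_of_adj hxy.symm hyb)
end

section
/- Let A be a nonempty dense finite set of integers and let t be an integer. Then A + {t, t+1} contains a set of |A| + 1 consecutive integers (in fact it is a set of consecutive integers of cardinality at least |A| + 1). -/
/-- A set of integers is dense if between any two of its members there are no
two consecutive integers both missing from it. -/
def DenseIntSet (A : Finset ℤ) : Prop :=
  ∀ a₁ ∈ A, ∀ a₂ ∈ A, a₁ < a₂ →
    ¬ ∃ b : ℤ, a₁ < b ∧ b < a₂ ∧ b ∉ A ∧ b + 1 ∉ A

open Pointwise in
/-- if `A` is a nonempty dense finite set of integers and `t` an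
integer, then `A + {t, t+1}` contains `|A| + 1` consecutive integers. -/
theorem stmt_6 (A : Finset ℤ) (hA : A.Nonempty) (hdense : DenseIntSet A) (t : ℤ) :
    ∃ s : ℤ, ∀ m : ℤ, s ≤ m → m < s + (A.card + 1 : ℤ) →
      m ∈ A + ({t, t + 1} : Finset ℤ) := by
  classical
  set a := A.min' hA with ha
  set c := A.max' hA with hc
  have hac : a ≤ c := A.min'_le (A.max' hA) (A.max'_mem hA)
  have haA : a ∈ A := A.min'_mem hA
  have hcA : c ∈ A := A.max'_mem hA
  have hcard : (A.card : ℤ) ≤ c - a + 1 := by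
    have hsub : A ⊆ Finset.Icc a c := fun x hx =>
      Finset.mem_Icc.mpr ⟨A.min'_le x hx, A.le_max' x hx⟩
    have h := Finset.card_le_card hsub
    rw [Int.card_Icc] at h
    omega
  refine ⟨a + t, fun m hm1 hm2 => ?_⟩
  have hmle : m ≤ c + t + 1 := by omega
  set b := m - t - 1 with hb
  have key : b ∈ A ∨ b + 1 ∈ A := by
    by_contra h
    push_neg at h
    obtain ⟨h1, h2⟩ := h
    have hba : a - 1 ≤ b := by omega
    have hbc : b ≤ c := by omega
    have hne1 : b ≠ a - 1 := by
      intro h; apply h2; rw [h]; simpa using haA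
    have hne2 : b ≠ a := fun h => h1 (h ▸ haA)
    have hne3 : b ≠ c := fun h => h1 (h ▸ hcA)
    exact hdense a haA c hcA (by omega) ⟨b, by omega, by omega, h1, h2⟩
  rcases key with h | h
  · exact Finset.mem_add.mpr ⟨b, h, t + 1, by simp, by omega⟩
  · exact Finset.mem_add.mpr ⟨b + 1, h, t, by simp, by omega⟩
end

section
/- For n ≥ 1, if a set A of integers is n-solid, then A + {0, 2} is (n+1)-solid. -/
/-- A set of integers is `n`-solid: for `n = 1` it contains two integers
differing by 1 or 3; for `n ≥ 2` (and `n = 0` degenerately) it contains `n`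
consecutive integers. -/
def Solid (A : Set ℤ) (n : ℕ) : Prop :=
  if n = 1 then ∃ x ∈ A, ∃ y ∈ A, y - x = 1 ∨ y - x = 3
  else ∃ s : ℤ, ∀ i : ℕ, i < n → s + (i : ℤ) ∈ A

open Pointwise in
lemma mem_add02 {A : Set ℤ} {x : ℤ} (hx : x ∈ A) (c : ℤ) (hc : c = 0 ∨ c = 2) :
    x + c ∈ A + ({0, 2} : Set ℤ) := by
  exact Set.add_mem_add hx (by rcases hc with h | h <;> simp [h])

open Pointwise in
/-- for `n ≥ 1`, if `A` is `n`-solid then `A + {0, 2}` is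
`(n+1)`-solid. -/
theorem stmt_7 (n : ℕ) (hn : 1 ≤ n) (A : Set ℤ) (h : Solid A n) :
    Solid (A + ({0, 2} : Set ℤ)) (n + 1) := by
  rcases eq_or_lt_of_le hn with h1 | h2
  · -- n = 1
    subst h1
    simp only [Solid, if_pos rfl] at h
    obtain ⟨x, hx, y, hy, hxy⟩ := h
    simp only [Solid, if_neg (by norm_num : (1 + 1 : ℕ) ≠ 1)]
    rcases hxy with hxy | hxy
    · refine ⟨x, fun i hi => ?_⟩
      interval_cases i
      · simpa using mem_add02 hx 0 (Or.inl rfl)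
      · have : x + (1 : ℤ) = y + 0 := by omega
        push_cast
        rw [this]
        exact mem_add02 hy 0 (Or.inl rfl)
    · refine ⟨x + 2, fun i hi => ?_⟩
      interval_cases i
      · simpa using mem_add02 hx 2 (Or.inr rfl)
      · have : x + 2 + (1 : ℤ) = y + 0 := by omega
        push_cast
        rw [this]
        exact mem_add02 hy 0 (Or.inl rfl)
  · -- n ≥ 2
    have hn2 : 2 ≤ n := h2
    simp only [Solid, if_neg (by omega : n ≠ 1)] at h
    obtain ⟨s, hs⟩ := h
    simp only [Solid, if_neg (by omega : n + 1 ≠ 1)]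
    refine ⟨s, fun i hi => ?_⟩
    by_cases hin : i < n
    · have := mem_add02 (hs i hin) 0 (Or.inl rfl)
      simpa using this
    · have hi' : i = n := by omega
      have hmem := hs (n - 2) (by omega)
      have := mem_add02 hmem 2 (Or.inr rfl)
      have heq : s + ((n - 2 : ℕ) : ℤ) + 2 = s + (i : ℤ) := by
        push_cast [hi']
        omega
      rwa [heq] at this
end

section
/- Let ν ≥ 2 be an integer. Let A_1 be a set of integers of cardinality at most ν+1 that includes a dense subset of cardinality ν and contains two integers x, y with y − x ∈ {1, 3}. Let A_2 be a dense set of integers of cardinality ν. Then the sumset A_1 + A_2 contains ν consecutive integers. -/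
lemma dense_cover {A : Finset ℤ} (hA : DenseIntSet A) (hne : A.Nonempty)
    {t : ℤ} (h1 : A.min' hne ≤ t) (h2 : t ≤ A.max' hne) : t ∈ A ∨ t - 1 ∈ A := by
  by_contra h
  push_neg at h
  obtain ⟨h3, h4⟩ := h
  have hm := A.min'_mem hne
  have hM := A.max'_mem hne
  have hne1 : t ≠ A.min' hne := fun he => h3 (he ▸ hm)
  have hne2 : t ≠ A.max' hne := fun he => h3 (he ▸ hM)
  have hne3 : t - 1 ≠ A.min' hne := fun he => h4 (he ▸ hm)
  exact hA _ hm _ hM (by omega) ⟨t - 1, by omega, by omega, h4, by simpa using h3⟩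

lemma dense_span {A : Finset ℤ} (hne : A.Nonempty) :
    (A.card : ℤ) ≤ A.max' hne - A.min' hne + 1 := by
  have hsub : A ⊆ Finset.Icc (A.min' hne) (A.max' hne) :=
    fun a ha => Finset.mem_Icc.mpr ⟨A.min'_le a ha, A.le_max' a ha⟩
  have := Finset.card_le_card hsub
  rw [Int.card_Icc] at this
  have h := A.min'_le _ (A.max'_mem hne)
  omega

lemma dense_ap {A : Finset ℤ} (hA : DenseIntSet A) (hne : A.Nonempty)
    (no1 : ∀ p ∈ A, p + 1 ∉ A) :
    ∀ t : ℤ, A.min' hne ≤ t → t ≤ A.max' hne → (t ∈ A ↔ (t - A.min' hne) % 2 = 0) := by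
  have key : ∀ k : ℕ, A.min' hne + k ≤ A.max' hne → ((A.min' hne + k) ∈ A ↔ (k : ℤ) % 2 = 0) := by
    intro k
    induction k with
    | zero => intro _; simp [A.min'_mem hne]
    | succ n ih =>
      intro hle
      push_cast at hle ⊢
      have hcov : A.min' hne + n + 1 ∈ A ∨ A.min' hne + n ∈ A := by
        have := dense_cover hA hne (t := A.min' hne + n + 1) (by omega) (by omega)
        rcases this with h | h
        · exact Or.inl h
        · right; convert h using 1; ring
      have ihn : A.min' hne + n ∈ A ↔ (n : ℤ) % 2 = 0 := by
        have := ih (by omega); exact this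
      have h1 : A.min' hne + n + 1 ∈ A ↔ A.min' hne + n ∉ A :=
        ⟨fun h hn' => no1 _ hn' h, fun h => hcov.resolve_right h⟩
      rw [show A.min' hne + (n + 1) = A.min' hne + n + 1 by ring, h1, ihn]
      omega
  intro t h1 h2
  obtain ⟨k, hk⟩ : ∃ k : ℕ, t = A.min' hne + k := ⟨(t - A.min' hne).toNat, by omega⟩
  subst hk
  rw [key k h2]
  omega

lemma dense_span2 {A : Finset ℤ} (hA : DenseIntSet A) (hne : A.Nonempty)
    (no1 : ∀ p ∈ A, p + 1 ∉ A) :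
    2 * (A.card : ℤ) ≤ A.max' hne - A.min' hne + 2 := by
  set m := A.min' hne
  set M := A.max' hne
  have hsub : A ⊆ (Finset.Icc (0:ℤ) ((M - m)/2)).image (fun k => m + 2*k) := by
    intro d hd
    have h1 := A.min'_le d hd
    have h2 := A.le_max' d hd
    have h3 := (dense_ap hA hne no1 d h1 h2).mp hd
    exact Finset.mem_image.mpr ⟨(d - m)/2, Finset.mem_Icc.mpr ⟨by omega, by omega⟩, by omega⟩
  have := (Finset.card_le_card hsub).trans Finset.card_image_le
  rw [Int.card_Icc] at this
  have h := A.min'_le _ (A.max'_mem hne)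
  omega

open Pointwise in
/-- let `ν ≥ 2`, let `A₁` have at most `ν + 1` elements, include a
dense subset of cardinality `ν`, and contain two integers differing by 1 or 3;
let `A₂` be dense of cardinality `ν`. Then `A₁ + A₂` contains `ν` consecutive
integers. -/
theorem stmt_8 (ν : ℕ) (hν : 2 ≤ ν) (A₁ A₂ : Finset ℤ)
    (hcard : A₁.card ≤ ν + 1)
    (hD : ∃ D ⊆ A₁, DenseIntSet D ∧ D.card = ν)
    (hxy : ∃ x ∈ A₁, ∃ y ∈ A₁, y - x = 1 ∨ y - x = 3)
    (hA₂dense : DenseIntSet A₂) (hA₂card : A₂.card = ν) :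
    ∃ s : ℤ, ∀ i : ℕ, i < ν → s + (i : ℤ) ∈ A₁ + A₂ := by
  obtain ⟨D, hDsub, hDdense, hDcard⟩ := hD
  obtain ⟨x, hx, y, hy, hxy3⟩ := hxy
  have hA₂ne : A₂.Nonempty := Finset.card_pos.mp (by omega)
  have hDne : D.Nonempty := Finset.card_pos.mp (by omega)
  set e := A₂.min' hA₂ne with he
  set f := A₂.max' hA₂ne with hf
  set m := D.min' hDne with hm
  set M := D.max' hDne with hM
  have hspan₂ : (ν : ℤ) ≤ f - e + 1 := by
    have := dense_span hA₂ne; rw [hA₂card] at this; exact this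
  have hspanD : (ν : ℤ) ≤ M - m + 1 := by
    have := dense_span hDne; rw [hDcard] at this; exact this
  by_cases hp1 : ∃ p, p ∈ A₁ ∧ p + 1 ∈ A₁
  · obtain ⟨p, hp, hp'⟩ := hp1
    refine ⟨p + e, fun i hi => ?_⟩
    have hi' : (i : ℤ) < ν := by exact_mod_cast hi
    have hcov := dense_cover hA₂dense hA₂ne (t := e + i) (by omega) (by omega)
    rcases hcov with h | h
    · exact Finset.mem_add.mpr ⟨p, hp, e + i, h, by ring⟩
    · exact Finset.mem_add.mpr ⟨p + 1, hp', e + i - 1, h, by ring⟩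
  by_cases hp2 : ∃ u, u ∈ A₂ ∧ u + 1 ∈ A₂
  · obtain ⟨u, hu, hu'⟩ := hp2
    refine ⟨m + u, fun i hi => ?_⟩
    have hi' : (i : ℤ) < ν := by exact_mod_cast hi
    have hcov := dense_cover hDdense hDne (t := m + i) (by omega) (by omega)
    rcases hcov with h | h
    · exact Finset.mem_add.mpr ⟨m + i, hDsub h, u, hu, by ring⟩
    · exact Finset.mem_add.mpr ⟨m + i - 1, hDsub h, u + 1, hu', by ring⟩
  push_neg at hp1 hp2
  have no1D : ∀ p ∈ D, p + 1 ∉ D := fun p hp h => hp1 p (hDsub hp) (hDsub h)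
  have no1₂ : ∀ p ∈ A₂, p + 1 ∉ A₂ := fun p hp h => hp2 p hp h
  have apD := dense_ap hDdense hDne no1D
  have apA₂ := dense_ap hA₂dense hA₂ne no1₂
  have hMm : (M - m) % 2 = 0 := (apD M (D.min'_le _ (D.max'_mem hDne)) le_rfl).mp (D.max'_mem hDne)
  have hfe : (f - e) % 2 = 0 :=
    (apA₂ f (A₂.min'_le _ (A₂.max'_mem hA₂ne)) le_rfl).mp (A₂.max'_mem hA₂ne)
  have hspD2 : 2 * (ν : ℤ) ≤ M - m + 2 := by
    have := dense_span2 hDdense hDne no1D; rw [hDcard] at this; exact this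
  have hsp22 : 2 * (ν : ℤ) ≤ f - e + 2 := by
    have := dense_span2 hA₂dense hA₂ne no1₂; rw [hA₂card] at this; exact this
  have hyx : y = x + 3 := by
    rcases hxy3 with h | h
    · exact absurd (show x + 1 ∈ A₁ by rw [show x + 1 = y by omega]; exact hy) (hp1 x hx)
    · omega
  rw [hyx] at hy
  have hsdiff : (A₁ \ D).card ≤ 1 := by
    have := Finset.card_sdiff_of_subset hDsub
    have := Finset.card_le_card hDsub
    omega
  have hone : x ∈ D ∨ x + 3 ∈ D := by
    by_contra h; push_neg at h
    have h2 : 1 < (A₁ \ D).card := Finset.one_lt_card.mpr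
      ⟨x, Finset.mem_sdiff.mpr ⟨hx, h.1⟩, x + 3, Finset.mem_sdiff.mpr ⟨hy, h.2⟩, by omega⟩
    omega
  obtain ⟨z, hzA₁, hzodd, hzlo, hzhi⟩ :
      ∃ z, z ∈ A₁ ∧ (z - m) % 2 = 1 ∧ -3 ≤ z - m ∧ z - m ≤ M - m + 3 := by
    rcases hone with h | h
    · have h1 := D.min'_le _ h
      have h2 := D.le_max' _ h
      have h3 := (apD x h1 h2).mp h
      exact ⟨x + 3, hy, by omega, by omega, by omega⟩
    · have h1 := D.min'_le _ h
      have h2 := D.le_max' _ h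
      have h3 := (apD (x + 3) h1 h2).mp h
      exact ⟨x, hx, by omega, by omega, by omega⟩
  refine ⟨max (m + e) (z + e) - 1, fun i hi => ?_⟩
  have hi' : (i : ℤ) < ν := by exact_mod_cast hi
  have hmax1 : m + e ≤ max (m + e) (z + e) := le_max_left _ _
  have hmax2 : z + e ≤ max (m + e) (z + e) := le_max_right _ _
  have hmax3 : max (m + e) (z + e) = m + e ∨ max (m + e) (z + e) = z + e := max_choice _ _
  set K := max (m + e) (z + e) with hK
  set t : ℤ := K - 1 + i with htdef
  show t ∈ A₁ + A₂
  by_cases hpar : (t - (m + e)) % 2 = 0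
  · -- even class: t = d + a with d ∈ D, a ∈ A₂
    have hb1 : m + e ≤ t := by omega
    have hb2 : t ≤ M + f := by omega
    by_cases hta : t - M ≤ e
    · have hbD : t - e ∈ D := (apD (t - e) (by omega) (by omega)).mpr (by omega)
      exact Finset.mem_add.mpr ⟨t - e, hDsub hbD, e, A₂.min'_mem hA₂ne, by ring⟩
    · have haA : t - M ∈ A₂ := (apA₂ (t - M) (by omega) (by omega)).mpr (by omega)
      exact Finset.mem_add.mpr ⟨M, hDsub (D.max'_mem hDne), t - M, haA, by ring⟩
  · -- odd class: t = z + a with a ∈ A₂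
    have hb1 : z + e ≤ t := by omega
    have hb2 : t ≤ z + f := by omega
    have haA : t - z ∈ A₂ := (apA₂ (t - z) (by omega) (by omega)).mpr (by omega)
    exact Finset.mem_add.mpr ⟨z, hzA₁, t - z, haA, by ring⟩
end

section
/- Let G be a triangle-free graph admitting a type 2 t-cable with nonempty base, where t = ℓ − 3 and ℓ ≥ 5. Then G has an induced cycle of length ℓ. -/
/-- a triangle-free graph admitting a type 2 `(ℓ-3)`-cable with
nonempty base has an induced cycle of length `ℓ` (for `ℓ ≥ 5`). -/
theorem stmt_11 {V : Type*} (G : SimpleGraph V) (hTF : G.CliqueFree 3)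
    (ℓ t : ℕ) (hℓ : 5 ≤ ℓ) (ht : t = ℓ - 3)
    (x : Fin t → V) (N : Fin t → Set V) (Z : Fin t → Fin t → Set V)
    (Y : Fin t → Set V) (C : Set V)
    -- the `x i` are pairwise nonadjacent (and distinct)
    (hxdist : Function.Injective x)
    (hxnadj : ∀ i j : Fin t, i ≠ j → ¬ G.Adj (x i) (x j))
    -- `N i` is a set of neighbours of `x i`, and the `N i` are pairwise disjoint
    (hNnbr : ∀ i : Fin t, N i ⊆ G.neighborSet (x i))
    (hNdisj : ∀ i j : Fin t, i ≠ j → Disjoint (N i) (N j))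
    -- the sets `Z i j` (for `i < j`) and `Y i` are disjoint subsets of `N i`
    (hZsub : ∀ i j : Fin t, i < j → Z i j ⊆ N i)
    (hYsub : ∀ i : Fin t, Y i ⊆ N i)
    (hZZdisj : ∀ i j j' : Fin t, i < j → i < j' → j ≠ j' → Disjoint (Z i j) (Z i j'))
    (hZYdisj : ∀ i j : Fin t, i < j → Disjoint (Z i j) (Y i))
    -- `C` is disjoint from `{x 1, …, x t} ∪ N 1 ∪ ⋯ ∪ N t`
    (hCx : ∀ i : Fin t, x i ∉ C)
    (hCN : ∀ i : Fin t, Disjoint C (N i))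
    -- every vertex of `C` has a neighbour in each `Y i`, no neighbour in any
    -- `Z i j`, and is nonadjacent to each `x i`
    (hCY : ∀ v ∈ C, ∀ i : Fin t, ∃ y ∈ Y i, G.Adj v y)
    (hCZ : ∀ v ∈ C, ∀ i j : Fin t, i < j → ∀ z ∈ Z i j, ¬ G.Adj v z)
    (hCxadj : ∀ v ∈ C, ∀ i : Fin t, ¬ G.Adj v (x i))
    -- for `i < j`, `x i` has no neighbours in `N j`
    (hxN : ∀ i j : Fin t, i < j → ∀ w ∈ N j, ¬ G.Adj (x i) w)
    -- for `i < j < k`, there are no edges between `Z i j` and `N k`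
    (hZN : ∀ i j k : Fin t, i < j → j < k → ∀ z ∈ Z i j, ∀ w ∈ N k, ¬ G.Adj z w)
    -- type 2: for all `i < j`, every vertex of `N j` has a neighbour in
    -- `Z i j` and no neighbour in `Y i`
    (htype2 : ∀ i j : Fin t, i < j → ∀ w ∈ N j,
      (∃ z ∈ Z i j, G.Adj w z) ∧ (∀ y ∈ Y i, ¬ G.Adj w y))
    -- nonempty base
    (hCne : C.Nonempty) :
    HasInducedCycle G ℓ := by
  classical
  have ht0 : 0 < t := by omega
  have ht2 : 2 ≤ t := by omega
  have hlt3 : ℓ = t + 3 := by omega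
  obtain ⟨c, hc⟩ := hCne
  haveI : Nonempty V := ⟨c⟩
  -- index function : idx k = t-1-k as an element of Fin t
  obtain ⟨idx, hidxv⟩ : ∃ idx : ℕ → Fin t, ∀ k, k < t → (idx k).val = t - 1 - k :=
    ⟨fun k => ⟨(t - 1 - k) % t, Nat.mod_lt _ ht0⟩, fun k hk => Nat.mod_eq_of_lt (by omega)⟩
  obtain ⟨yt, hytY, hytadj⟩ := hCY c hc (idx 0)
  obtain ⟨y1, hy1Y, hy1adj⟩ := hCY c hc (idx (t - 1))
  -- the chain b 0 = yt, b (k+1) a neighbour of b k in Z (idx (k+1)) (idx k)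
  obtain ⟨b, hb0, hbsucc⟩ : ∃ b : ℕ → V, b 0 = yt ∧ ∀ k, b (k + 1) =
      Classical.epsilon (fun w => w ∈ Z (idx (k + 1)) (idx k) ∧ G.Adj (b k) w) :=
    ⟨fun k => Nat.rec yt (fun k prev =>
      Classical.epsilon (fun w => w ∈ Z (idx (k + 1)) (idx k) ∧ G.Adj prev w)) k,
      rfl, fun k => rfl⟩
  have hbinv : ∀ k, k < t → b k ∈ N (idx k) ∧
      (0 < k → b k ∈ Z (idx k) (idx (k - 1)) ∧ G.Adj (b (k - 1)) (b k)) := by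
    intro k
    induction k with
    | zero =>
      intro _
      refine ⟨?_, fun h => absurd h (by omega)⟩
      rw [hb0]; exact hYsub _ hytY
    | succ k ih =>
      intro hk
      have hN := (ih (by omega)).1
      have hlt : idx (k + 1) < idx k := by
        rw [Fin.lt_def, hidxv _ hk, hidxv _ (by omega)]; omega
      obtain ⟨⟨z, hz, hzadj⟩, -⟩ := htype2 _ _ hlt (b k) hN
      have hspec := Classical.epsilon_spec (⟨z, hz, hzadj⟩ :
        ∃ w, w ∈ Z (idx (k + 1)) (idx k) ∧ G.Adj (b k) w)
      simp only [Nat.add_sub_cancel]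
      rw [hbsucc k]
      exact ⟨hZsub _ _ hlt hspec.1, fun _ => ⟨hspec.1, hspec.2⟩⟩
  have hbN : ∀ k, k < t → b k ∈ N (idx k) := fun k hk => (hbinv k hk).1
  have hbZ : ∀ k, 0 < k → k < t → b k ∈ Z (idx k) (idx (k - 1)) :=
    fun k h0 hk => ((hbinv k hk).2 h0).1
  have hbadj : ∀ k, 0 < k → k < t → G.Adj (b (k - 1)) (b k) :=
    fun k h0 hk => ((hbinv k hk).2 h0).2
  -- the cycle function on ℕ
  obtain ⟨g, hg0, hgb, hgx, hgy⟩ : ∃ g : ℕ → V, g 0 = c ∧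
      (∀ k, 1 ≤ k → k ≤ t → g k = b (k - 1)) ∧ g (t + 1) = x (idx (t - 1)) ∧
      g (t + 2) = y1 := by
    refine ⟨fun k => if k = 0 then c else if k ≤ t then b (k - 1)
      else if k = t + 1 then x (idx (t - 1)) else y1, by simp, ?_, ?_, ?_⟩
    · intro k h1 h2
      simp only
      rw [if_neg (by omega), if_pos h2]
    · simp only
      rw [if_neg (by omega), if_neg (by omega)]
      simp
    · simp only
      rw [if_neg (by omega), if_neg (by omega), if_neg (by omega)]
  -- basic non-membership facts
  have hcnotN : ∀ k : Fin t, c ∉ N k := fun k => Set.disjoint_left.mp (hCN k) hc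
  have hxnotN : ∀ i k : Fin t, x i ∉ N k := by
    intro i k h
    have hadj := hNnbr k h
    rw [SimpleGraph.mem_neighborSet] at hadj
    by_cases hik : k = i
    · subst hik; exact G.irrefl hadj
    · exact hxnadj k i hik hadj
  have hy1N : y1 ∈ N (idx (t - 1)) := hYsub _ hy1Y
  -- adjacency of cyclically consecutive vertices
  have hAdjCons : ∀ k, k + 1 < ℓ → G.Adj (g k) (g (k + 1)) := by
    intro k hk
    rcases Nat.eq_zero_or_pos k with h0 | h1
    · subst h0
      rw [hg0, hgb 1 le_rfl (by omega)]
      simpa [hb0] using hytadj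
    · rcases Nat.lt_or_ge k t with hkt | hkt
      · rw [hgb k h1 (by omega), hgb (k + 1) (by omega) (by omega)]
        simpa using hbadj (k + 1 - 1) (by omega) (by omega)
      · rcases Nat.eq_or_lt_of_le hkt with hkt' | hkt'
        · -- k = t : b (t-1) ~ x (idx (t-1))
          rw [← hkt']
          rw [hgb t (by omega) le_rfl, hgx]
          have := hNnbr (idx (t - 1)) (hbN (t - 1) (by omega))
          rw [SimpleGraph.mem_neighborSet] at this
          exact this.symm
        · -- k = t + 1 : x (idx (t-1)) ~ y1
          have hk' : k = t + 1 := by omega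
          subst hk'
          rw [hgx, hgy]
          have := hNnbr (idx (t - 1)) hy1N
          rw [SimpleGraph.mem_neighborSet] at this
          exact this
  have hWrap : G.Adj (g (ℓ - 1)) (g 0) := by
    have : ℓ - 1 = t + 2 := by omega
    rw [this, hgy, hg0]
    exact hy1adj.symm
  -- non-adjacency of non-consecutive vertices
  have hNonAdj : ∀ i j, i < j → j < ℓ → i + 1 < j → ¬(i = 0 ∧ j = ℓ - 1) →
      ¬ G.Adj (g i) (g j) := by
    intro i j hij hjl hcons hwrap hadj
    rcases Nat.eq_zero_or_pos i with hi0 | hi1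
    · subst hi0
      rw [hg0] at hadj
      rcases Nat.lt_or_ge j (t + 1) with hjt | hjt
      · -- 2 ≤ j ≤ t : c vs b (j-1) ∈ Z _ _
        rw [hgb j (by omega) (by omega)] at hadj
        have hz := hbZ (j - 1) (by omega) (by omega)
        have hlt : idx (j - 1) < idx (j - 1 - 1) := by
          rw [Fin.lt_def, hidxv _ (by omega), hidxv _ (by omega)]; omega
        exact hCZ c hc _ _ hlt _ hz hadj
      · rcases Nat.eq_or_lt_of_le hjt with hjt' | hjt'
        · rw [← hjt', hgx] at hadj
          exact hCxadj c hc _ hadj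
        · exact hwrap ⟨rfl, by omega⟩
    · rcases Nat.lt_or_ge j (t + 1) with hjt | hjt
      · -- both in the chain, non-consecutive
        rw [hgb i hi1 (by omega), hgb j (by omega) (by omega)] at hadj
        have hz := hbZ (j - 1) (by omega) (by omega)
        have hw := hbN (i - 1) (by omega)
        have hlt1 : idx (j - 1) < idx (j - 1 - 1) := by
          rw [Fin.lt_def, hidxv _ (by omega), hidxv _ (by omega)]; omega
        have hlt2 : idx (j - 1 - 1) < idx (i - 1) := by
          rw [Fin.lt_def, hidxv _ (by omega), hidxv _ (by omega)]; omega
        exact hZN _ _ _ hlt1 hlt2 _ hz _ hw hadj.symm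
      · rcases Nat.eq_or_lt_of_le hjt with hjt' | hjt'
        · -- j = t + 1 : b (i-1) vs x (idx (t-1)), with i ≤ t - 1
          rw [hgb i hi1 (by omega), ← hjt', hgx] at hadj
          have hw := hbN (i - 1) (by omega)
          have hlt : idx (t - 1) < idx (i - 1) := by
            rw [Fin.lt_def, hidxv _ (by omega), hidxv _ (by omega)]; omega
          exact hxN _ _ hlt _ hw hadj.symm
        · -- j = t + 2
          have hj' : j = t + 2 := by omega
          subst hj'
          rcases Nat.lt_or_ge i t with hit | hit
          · -- i ≤ t - 1 : type 2 non-adjacency to Y (idx (t-1))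
            rw [hgb i hi1 (by omega), hgy] at hadj
            have hw := hbN (i - 1) (by omega)
            have hlt : idx (t - 1) < idx (i - 1) := by
              rw [Fin.lt_def, hidxv _ (by omega), hidxv _ (by omega)]; omega
            exact (htype2 _ _ hlt _ hw).2 y1 hy1Y hadj
          · -- i = t : triangle-free
            have hi' : i = t := by omega
            rw [hgb i hi1 (by omega), hgy] at hadj
            have h1 := hNnbr (idx (i - 1)) (hbN (i - 1) (by omega))
            have h2 := hNnbr (idx (t - 1)) hy1N
            rw [SimpleGraph.mem_neighborSet] at h1 h2
            have hidxeq : idx (i - 1) = idx (t - 1) := by rw [hi']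
            rw [hidxeq] at h1
            exact hTF {x (idx (t - 1)), b (i - 1), y1}
              (SimpleGraph.is3Clique_triple_iff.mpr ⟨h1, h2, hadj⟩)
  -- injectivity on [0, ℓ)
  have hInj : ∀ i j, i < j → j < ℓ → g i ≠ g j := by
    intro i j hij hjl hgij
    have hNne : ∀ k m, k < t → m < t → k ≠ m → b k ≠ b m := by
      intro k m hk hm hkm he
      have h1 := hbN k hk
      rw [he] at h1
      have hne : idx k ≠ idx m := by
        rw [Fin.ne_iff_vne, hidxv _ hk, hidxv _ hm]; omega
      exact Set.disjoint_left.mp (hNdisj _ _ hne) h1 (hbN m hm)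
    rcases Nat.eq_zero_or_pos i with hi0 | hi1
    · subst hi0
      rw [hg0] at hgij
      rcases Nat.lt_or_ge j (t + 1) with hjt | hjt
      · rw [hgb j (by omega) (by omega)] at hgij
        exact hcnotN _ (hgij ▸ hbN (j - 1) (by omega))
      · rcases Nat.eq_or_lt_of_le hjt with hjt' | hjt'
        · rw [← hjt', hgx] at hgij
          exact hCx _ (hgij ▸ hc)
        · have hj' : j = t + 2 := by omega
          subst hj'
          rw [hgy] at hgij
          exact hcnotN _ (hgij ▸ hy1N)
    · rcases Nat.lt_or_ge j (t + 1) with hjt | hjt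
      · rw [hgb i hi1 (by omega), hgb j (by omega) (by omega)] at hgij
        exact hNne _ _ (by omega) (by omega) (by omega) hgij
      · rcases Nat.eq_or_lt_of_le hjt with hjt' | hjt'
        · rw [hgb i hi1 (by omega), ← hjt', hgx] at hgij
          exact hxnotN _ _ (hgij ▸ hbN (i - 1) (by omega))
        · have hj' : j = t + 2 := by omega
          subst hj'
          rcases Nat.lt_or_ge i (t + 1) with hit1 | hit1
          swap
          · have hi' : i = t + 1 := by omega
            rw [hi', hgx, hgy] at hgij
            exact hxnotN (idx (t - 1)) (idx (t - 1)) (by rw [hgij]; exact hy1N)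
          rw [hgb i hi1 (by omega), hgy] at hgij
          rcases Nat.lt_or_ge i t with hit | hit
          · have hne : idx (i - 1) ≠ idx (t - 1) := by
              rw [Fin.ne_iff_vne, hidxv _ (by omega), hidxv _ (by omega)]; omega
            exact Set.disjoint_left.mp (hNdisj _ _ hne)
              (hbN (i - 1) (by omega)) (hgij ▸ hy1N)
          · have hi' : i = t := by omega
            have hz := hbZ (i - 1) (by omega) (by omega)
            have hlt : idx (i - 1) < idx (i - 1 - 1) := by
              rw [Fin.lt_def, hidxv _ (by omega), hidxv _ (by omega)]; omega
            have hidxeq : idx (i - 1) = idx (t - 1) := by rw [hi']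
            rw [hidxeq] at hz hlt
            exact Set.disjoint_left.mp (hZYdisj _ _ hlt) hz (hgij ▸ hy1Y)
  -- assemble
  haveI : NeZero ℓ := ⟨by omega⟩
  have hvadd1 : ∀ i : ZMod ℓ, (i + 1).val = (i.val + 1) % ℓ := by
    intro i
    rw [ZMod.val_add, ZMod.val_one_eq_one_mod, Nat.mod_eq_of_lt (show 1 < ℓ by omega)]
  refine ⟨fun i => g i.val, ?_, ?_⟩
  · intro i j hij
    by_contra hne
    rcases lt_trichotomy i.val j.val with h | h | h
    · exact hInj _ _ h (ZMod.val_lt j) hij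
    · exact hne (ZMod.val_injective ℓ h)
    · exact hInj _ _ h (ZMod.val_lt i) hij.symm
  · intro i j
    constructor
    · intro hadj
      have hvi := ZMod.val_lt i
      have hvj := ZMod.val_lt j
      have hne : i.val ≠ j.val := fun h => G.ne_of_adj hadj (congrArg g h)
      rcases lt_trichotomy i.val j.val with h | h | h
      · by_cases h1 : j.val = i.val + 1
        · left
          apply ZMod.val_injective
          rw [hvadd1, Nat.mod_eq_of_lt (by omega)]
          exact h1
        · by_cases h2 : i.val = 0 ∧ j.val = ℓ - 1
          · right
            apply ZMod.val_injective
            rw [hvadd1, h2.2, show ℓ - 1 + 1 = ℓ from by omega, Nat.mod_self, h2.1]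
          · exact absurd hadj (hNonAdj _ _ h hvj (by omega) h2)
      · exact absurd h hne
      · by_cases h1 : i.val = j.val + 1
        · right
          apply ZMod.val_injective
          rw [hvadd1, Nat.mod_eq_of_lt (by omega)]
          exact h1
        · by_cases h2 : j.val = 0 ∧ i.val = ℓ - 1
          · left
            apply ZMod.val_injective
            rw [hvadd1, h2.2, show ℓ - 1 + 1 = ℓ from by omega, Nat.mod_self, h2.1]
          · exact absurd hadj.symm (hNonAdj _ _ h hvi (by omega) h2)
    · intro h
      rcases h with h | h
      · subst h
        show G.Adj (g i.val) (g (i + 1).val)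
        rw [hvadd1]
        by_cases hi : i.val = ℓ - 1
        · rw [hi, show ℓ - 1 + 1 = ℓ from by omega, Nat.mod_self]
          exact hWrap
        · rw [Nat.mod_eq_of_lt (by have := ZMod.val_lt i; omega)]
          exact hAdjCons i.val (by have := ZMod.val_lt i; omega)
      · subst h
        show G.Adj (g (j + 1).val) (g j.val)
        rw [hvadd1]
        by_cases hj : j.val = ℓ - 1
        · rw [hj, show ℓ - 1 + 1 = ℓ from by omega, Nat.mod_self]
          exact hWrap.symm
        · rw [Nat.mod_eq_of_lt (by have := ZMod.val_lt j; omega)]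
          exact (hAdjCons j.val (by have := ZMod.val_lt j; omega)).symm
end

section
/- Let (L_0,...,L_k,W) be a w-bend in a triangle-free graph G with size at least 2p + 4. Then it contains a u-bend with size at least p. -/
/-- Data for a w-bend (or u-bend): a levelling `L 0, …, L k`, an enumeration
`p` of the induced path `G[L k]` (with `n + 1` vertices), and an induced path
`U` enumerated by `u` (with `m + 1` vertices, `u 0` the drain `s` and
`u (Fin.last m)` the other end `w`). -/
structure WBendData (V : Type*) where
  k : ℕ
  L : ℕ → Set V
  n : ℕ
  p : Fin (n + 1) → V
  m : ℕ
  u : Fin (m + 1) → V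

namespace WBendData

variable {V : Type*}

/-- The drain `s` of the w-bend. -/
def drain (B : WBendData V) : V := B.u 0

/-- The end `w` of the path `U`. -/
def wend (B : WBendData V) : V := B.u (Fin.last B.m)

/-- The size of the w-bend: the distance in `G` between the two ends of the
path `G[L k]`. -/
noncomputable def size (G : SimpleGraph V) (B : WBendData V) : ℕ :=
  G.dist (B.p 0) (B.p (Fin.last B.n))

end WBendData

/-- `B` is a w-bend in `G`. -/
def IsWBend {V : Type*} (G : SimpleGraph V) (B : WBendData V) : Prop :=
  1 ≤ B.k ∧
  -- `(L 0, …, L k)` is a levelling: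
  (∀ i j, i ≤ B.k → j ≤ B.k → i ≠ j → Disjoint (B.L i) (B.L j)) ∧
  (∃ z : V, B.L 0 = {z}) ∧
  (∀ i, 1 ≤ i → i ≤ B.k → ∀ v ∈ B.L i, ∃ w ∈ B.L (i - 1), G.Adj w v) ∧
  (∀ i j, j ≤ B.k → i + 1 < j → ∀ a ∈ B.L i, ∀ b ∈ B.L j, ¬ G.Adj a b) ∧
  -- `G[L k]` is an induced path, enumerated by `p`:
  Function.Injective B.p ∧
  (∀ i, B.p i ∈ B.L B.k) ∧
  (∀ v ∈ B.L B.k, ∃ i, B.p i = v) ∧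
  (∀ i j : Fin (B.n + 1), G.Adj (B.p i) (B.p j) ↔ (i.val + 1 = j.val ∨ j.val + 1 = i.val)) ∧
  -- `U` is an induced path, disjoint from `L 0 ∪ ⋯ ∪ L k`:
  Function.Injective B.u ∧
  (∀ i j : Fin (B.m + 1), G.Adj (B.u i) (B.u j) ↔ (i.val + 1 = j.val ∨ j.val + 1 = i.val)) ∧
  (∀ i : Fin (B.m + 1), ∀ j, j ≤ B.k → B.u i ∉ B.L j) ∧
  -- some vertex of `L (k-1)` is adjacent to `w` and to a vertex of `L k`:
  (∃ a ∈ B.L (B.k - 1), G.Adj a B.wend ∧ ∃ b ∈ B.L B.k, G.Adj a b) ∧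
  -- no edges between `V(U)` and `L k`:
  (∀ i : Fin (B.m + 1), ∀ b ∈ B.L B.k, ¬ G.Adj (B.u i) b) ∧
  -- no vertex of `L (k-1)` has both a neighbour in `L k` and a neighbour in
  -- `V(U) \ {w}`:
  (∀ a ∈ B.L (B.k - 1), (∃ b ∈ B.L B.k, G.Adj a b) →
    ∀ i : Fin (B.m + 1), i ≠ Fin.last B.m → ¬ G.Adj a (B.u i))

/-- `B` is a u-bend in `G`. -/
def IsUBend {V : Type*} (G : SimpleGraph V) (B : WBendData V) : Prop :=
  IsWBend G B ∧
  -- `w` has a unique neighbour `v` in `L (k-1)`: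
  (∃! a : V, a ∈ B.L (B.k - 1) ∧ G.Adj a B.wend) ∧
  -- this `v` has a unique neighbour in `L k`, which is an end of `G[L k]`:
  (∀ a ∈ B.L (B.k - 1), G.Adj a B.wend →
    (∃! b : V, b ∈ B.L B.k ∧ G.Adj a b) ∧
    (∀ b ∈ B.L B.k, G.Adj a b → b = B.p 0 ∨ b = B.p (Fin.last B.n))) ∧
  -- every vertex of `L (k-1)` has a neighbour in `L k`:
  (∀ a ∈ B.L (B.k - 1), ∃ b ∈ B.L B.k, G.Adj a b)

/-- `B'` is contained in `B`: same drain, levels included in the corresponding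
levels, and the path `U'` contained in `L k ∪ V(U)`. -/
def ContainedIn {V : Type*} (B' B : WBendData V) : Prop :=
  B'.k = B.k ∧ B'.drain = B.drain ∧
  (∀ i, i ≤ B.k → B'.L i ⊆ B.L i) ∧
  (∀ i : Fin (B'.m + 1), B'.u i ∈ B.L B.k ∪ Set.range B.u)

/-!
Call `x ∈ L (k-1)` a link from `w` to the vertex `p i` of the path `G[L k]` if `x` is adjacent to
both. Let `p T` be the last vertex of the path reached by a link and `p S` the first. Two links and
`w` give a walk of length 4 from `p S` to `p T`, so the size `d(p 0, p n)` is at most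
`d(p 0, p S) + 4 + d(p T, p n)`, and one of the two outer distances is at least `p`. Say it is the
second one (otherwise reverse the path). Cut `G[L k]` down to its part from `p T` on, and `L (k-1)`
down to the vertices that still have a neighbour there, keeping among the neighbours of `w` only
one link `a` to `p T`. By the maximality of `T`, `a` sees the new path only in its end `p T`, so
this is a u-bend of size `d(p T, p n)`.
-/

open SimpleGraph WBendData

section

variable {V : Type*} {G : SimpleGraph V}

theorem SimpleGraph.reachable_of_induced_path {n : ℕ} {f : Fin n → V}
    (hf : ∀ i j, G.Adj (f i) (f j) ↔ (i.val + 1 = j.val ∨ j.val + 1 = i.val)) (i j : Fin n) :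
    G.Reachable (f i) (f j) :=
  (pathGraph_preconnected n i j).map ⟨f, fun h => (hf _ _).2 (pathGraph_adj.1 h)⟩

namespace WBendData

def reverse (B : WBendData V) : WBendData V := { B with p := fun i => B.p i.rev }

def Links (G : SimpleGraph V) (B : WBendData V) (x : V) (i : Fin (B.n + 1)) : Prop :=
  x ∈ B.L (B.k - 1) ∧ G.Adj x B.wend ∧ G.Adj x (B.p i)

theorem links_reverse {B : WBendData V} {x : V} {i : Fin (B.n + 1)} :
    B.reverse.Links G x i ↔ B.Links G x i.rev :=
  Iff.rfl

def suffixPath (B : WBendData V) (T : Fin (B.n + 1)) (j : Fin (B.n - T + 1)) : V :=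
  B.p ⟨T + j, by have := T.isLt; have := j.isLt; omega⟩

def suffix (G : SimpleGraph V) (B : WBendData V) (T : Fin (B.n + 1)) (a : V) : WBendData V where
  k := B.k
  L i :=
    if i = B.k then Set.range (B.suffixPath T)
    else if i = B.k - 1 then
      {y ∈ B.L (B.k - 1) | (∃ j, G.Adj y (B.suffixPath T j)) ∧ (G.Adj y B.wend → y = a)}
    else B.L i
  n := B.n - T
  p := B.suffixPath T
  m := B.m
  u := B.u

variable {B : WBendData V} {T : Fin (B.n + 1)} {a : V}

theorem suffixPath_zero : B.suffixPath T 0 = B.p T :=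
  congrArg B.p (Fin.ext (by simp))

theorem suffixPath_last : B.suffixPath T (Fin.last _) = B.p (Fin.last B.n) :=
  congrArg B.p (Fin.ext (by have := T.isLt; simp only [Fin.val_last]; omega))

theorem suffixPath_injective (hp : Function.Injective B.p) : Function.Injective (B.suffixPath T) :=
  fun i j h => Fin.ext (by have := congrArg Fin.val (hp h); simpa using this)

theorem suffixPath_adj_iff
    (hp : ∀ i j : Fin (B.n + 1),
      G.Adj (B.p i) (B.p j) ↔ (i.val + 1 = j.val ∨ j.val + 1 = i.val))
    (i j : Fin (B.n - T + 1)) :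
    G.Adj (B.suffixPath T i) (B.suffixPath T j) ↔ (i.val + 1 = j.val ∨ j.val + 1 = i.val) := by
  rw [suffixPath, suffixPath, hp]
  dsimp only
  omega

theorem size_suffix : (B.suffix G T a).size G = G.dist (B.p T) (B.p (Fin.last B.n)) := by
  change G.dist (B.suffixPath T 0) (B.suffixPath T (Fin.last _)) = _
  rw [suffixPath_zero, suffixPath_last]

theorem size_reverse_suffix {S : Fin (B.reverse.n + 1)} :
    (B.reverse.suffix G S a).size G = G.dist (B.p S.rev) (B.p 0) := by
  rw [size_suffix]
  exact congrArg (G.dist _ <| B.p ·) (Fin.rev_last B.n)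

theorem suffix_k : (B.suffix G T a).k = B.k :=
  rfl

theorem suffix_L_self : (B.suffix G T a).L B.k = Set.range (B.suffixPath T) :=
  if_pos rfl

theorem suffix_L_pred (hk : B.k ≠ 0) : (B.suffix G T a).L (B.k - 1) =
    {y ∈ B.L (B.k - 1) | (∃ j, G.Adj y (B.suffixPath T j)) ∧ (G.Adj y B.wend → y = a)} := by
  simp [suffix, show B.k - 1 ≠ B.k by omega]

theorem suffix_L_of_ne {i : ℕ} (hi : i ≠ B.k) (hi' : i ≠ B.k - 1) :
    (B.suffix G T a).L i = B.L i := by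
  simp [suffix, hi, hi']

theorem suffix_L_subset (hp : ∀ i, B.p i ∈ B.L B.k) (i : ℕ) :
    (B.suffix G T a).L i ⊆ B.L i := by
  simp only [suffix]
  split_ifs with h₁ h₂
  · rintro _ ⟨j, rfl⟩
    exact h₁ ▸ hp _
  · exact h₂ ▸ fun y hy => hy.1
  · exact subset_rfl

theorem suffixPath_mem_suffix_L (j : Fin (B.n - T + 1)) :
    B.suffixPath T j ∈ (B.suffix G T a).L B.k := by
  rw [suffix_L_self]
  exact ⟨j, rfl⟩

theorem mem_suffix_L_pred (hk : B.k ≠ 0) (ha : B.Links G a T) :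
    a ∈ (B.suffix G T a).L (B.k - 1) := by
  rw [suffix_L_pred hk]
  exact ⟨ha.1, ⟨0, suffixPath_zero ▸ ha.2.2⟩, fun _ => rfl⟩

theorem eq_zero_of_adj_suffixPath (hT : ∀ x i, B.Links G x i → i ≤ T) {x : V}
    (hx : x ∈ B.L (B.k - 1)) (hxw : G.Adj x B.wend) {j : Fin (B.n - T + 1)}
    (hxj : G.Adj x (B.suffixPath T j)) : j = 0 := by
  have : T.val + j.val ≤ T.val := hT x _ ⟨hx, hxw, hxj⟩
  exact Fin.ext (by simp only [Fin.val_zero]; omega)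

end WBendData

namespace IsWBend

variable {B : WBendData V} {T : Fin (B.n + 1)} {a : V}

theorem reverse (hB : IsWBend G B) : IsWBend G B.reverse := by
  obtain ⟨hk, hdisj, hz, hlev, hnoedge, hpinj, hpmem, hpsurj, hpadj, huinj, huadj,
    hudisj, hbend, hUL, hlast⟩ := hB
  refine ⟨hk, hdisj, hz, hlev, hnoedge, hpinj.comp Fin.rev_injective, fun i => hpmem _,
    fun v hv => ?_, fun (i j : Fin (B.n + 1)) => ?_, huinj, huadj, hudisj, hbend, hUL, hlast⟩
  · obtain ⟨i, rfl⟩ := hpsurj v hv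
    exact ⟨i.rev, by simp [WBendData.reverse]⟩
  · change G.Adj (B.p i.rev) (B.p j.rev) ↔ (i.val + 1 = j.val ∨ j.val + 1 = i.val)
    rw [hpadj, Fin.val_rev, Fin.val_rev]
    omega

theorem exists_links_max (hB : IsWBend G B) :
    ∃ a T, B.Links G a T ∧ ∀ x i, B.Links G x i → i ≤ T := by
  classical
  obtain ⟨-, -, -, -, -, -, -, hpsurj, -, -, -, -, ⟨x, hx, hxw, b, hb, hxb⟩, -, -⟩ := hB
  obtain ⟨i, rfl⟩ := hpsurj b hb
  obtain ⟨T, hT, hmax⟩ := (Finset.univ.filter fun i => ∃ x, B.Links G x i).exists_max_image id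
    ⟨i, by simpa using ⟨x, hx, hxw, hxb⟩⟩
  obtain ⟨a, ha⟩ := (Finset.mem_filter.1 hT).2
  exact ⟨a, T, ha, fun y j hy => hmax j (by simpa using ⟨y, hy⟩)⟩

theorem size_le_of_links (hB : IsWBend G B) {a b : V} {S T : Fin (B.n + 1)} (hbS : B.Links G b S)
    (haT : B.Links G a T) :
    B.size G ≤ G.dist (B.p S) (B.p 0) + 4 + G.dist (B.p T) (B.p (Fin.last B.n)) := by
  obtain ⟨-, -, -, -, -, -, -, -, hpadj, -⟩ := hB
  let walk : G.Walk (B.p S) (B.p T) :=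
    .cons hbS.2.2.symm (.cons hbS.2.1 (.cons haT.2.1.symm (.cons haT.2.2 .nil)))
  have hST : G.dist (B.p S) (B.p T) ≤ 4 := dist_le walk
  have hvia_S := (reachable_of_induced_path hpadj 0 S).dist_triangle_left (B.p (Fin.last B.n))
  have hvia_T := walk.reachable.dist_triangle_left (B.p (Fin.last B.n))
  rw [size, SimpleGraph.dist_comm (u := B.p S)]
  omega

theorem containedIn_suffix (hB : IsWBend G B) :
    ContainedIn (B.suffix G T a) B := by
  obtain ⟨-, -, -, -, -, -, hpmem, -⟩ := hB
  exact ⟨rfl, rfl, fun i _ => suffix_L_subset hpmem i, fun i => Or.inr ⟨i, rfl⟩⟩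

theorem exists_suffix_L_zero_eq_singleton (hB : IsWBend G B) (ha : B.Links G a T) :
    ∃ z, (B.suffix G T a).L 0 = {z} := by
  obtain ⟨hk, -, ⟨z, hz⟩, -, -, -, hpmem, -⟩ := hB
  refine ⟨z, (Set.subset_singleton_iff_eq.1 (hz ▸ suffix_L_subset hpmem 0)).resolve_left
    (Set.nonempty_iff_ne_empty.1 ?_)⟩
  by_cases hk1 : B.k = 1
  · exact ⟨a, by simpa [hk1] using mem_suffix_L_pred (by omega) ha⟩
  · rw [suffix_L_of_ne (by omega) (by omega), hz]
    exact Set.singleton_nonempty z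

theorem exists_adj_of_mem_suffix_L (hB : IsWBend G B) (ha : B.Links G a T)
    (hT : ∀ x i, B.Links G x i → i ≤ T) (i : ℕ) (hi : 1 ≤ i) (hik : i ≤ B.k) (v : V)
    (hv : v ∈ (B.suffix G T a).L i) : ∃ y ∈ (B.suffix G T a).L (i - 1), G.Adj y v := by
  obtain ⟨-, -, -, hlev, -, -, hpmem, -⟩ := hB
  rcases hik.eq_or_lt with rfl | hik
  · rw [suffix_L_self] at hv
    obtain ⟨j, rfl⟩ := hv
    obtain ⟨y, hy, hyv⟩ := hlev _ hi le_rfl _ (hpmem _)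
    by_cases hya : G.Adj y B.wend → y = a
    · refine ⟨y, ?_, hyv⟩
      rw [suffix_L_pred (by omega)]
      exact ⟨hy, ⟨j, hyv⟩, hya⟩
    · obtain rfl := eq_zero_of_adj_suffixPath hT hy (Classical.not_imp.1 hya).1 hyv
      exact ⟨a, mem_suffix_L_pred (by omega) ha, suffixPath_zero ▸ ha.2.2⟩
  · obtain ⟨y, hy, hyv⟩ := hlev i hi hik.le v (suffix_L_subset hpmem i hv)
    exact ⟨y, by rwa [suffix_L_of_ne (by omega) (by omega)], hyv⟩

theorem suffix (hB : IsWBend G B) (ha : B.Links G a T) (hT : ∀ x i, B.Links G x i → i ≤ T) :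
    IsWBend G (B.suffix G T a) := by
  have hparent := hB.exists_adj_of_mem_suffix_L ha hT
  have hzero := hB.exists_suffix_L_zero_eq_singleton ha
  obtain ⟨hk, hdisj, -, -, hnoedge, hpinj, hpmem, -, hpadj, huinj, huadj, hudisj, -, hUL,
    hlast⟩ := hB
  have hsub := suffix_L_subset (G := G) (T := T) (a := a) hpmem
  refine ⟨hk, fun i j hi hj hij => (hdisj i j hi hj hij).mono (hsub i) (hsub j),
    hzero, hparent,
    fun i j hj hij x hx y hy => hnoedge i j hj hij x (hsub i hx) y (hsub j hy),
    suffixPath_injective hpinj, suffixPath_mem_suffix_L, fun v hv => ?_, suffixPath_adj_iff hpadj,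
    huinj, huadj, fun i j hj hm => hudisj i j hj (hsub j hm),
    ⟨a, mem_suffix_L_pred (by omega) ha, ha.2.1, _, suffixPath_mem_suffix_L 0,
      suffixPath_zero ▸ ha.2.2⟩,
    fun i b hb => hUL i b (hsub _ hb),
    fun x hx ⟨b, hb, hxb⟩ => hlast x (hsub _ hx) ⟨b, hsub _ hb, hxb⟩⟩
  rwa [suffix_k, suffix_L_self] at hv

theorem isUBend_suffix (hB : IsWBend G B) (ha : B.Links G a T)
    (hT : ∀ x i, B.Links G x i → i ≤ T) : IsUBend G (B.suffix G T a) := by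
  have hk : B.k ≠ 0 := Nat.one_le_iff_ne_zero.1 hB.1
  refine ⟨hB.suffix ha hT, ?_, ?_, ?_⟩ <;> rw [suffix_k, suffix_L_pred hk]
  · refine ⟨a, ⟨⟨ha.1, ⟨0, suffixPath_zero ▸ ha.2.2⟩, fun _ => rfl⟩, ha.2.1⟩, ?_⟩
    rintro y ⟨hy, hyw⟩
    exact hy.2.2 hyw
  · rintro x ⟨hx, ⟨j, hxj⟩, -⟩ hxw
    obtain rfl := eq_zero_of_adj_suffixPath hT hx hxw hxj
    have hnb : ∀ b ∈ (B.suffix G T a).L B.k, G.Adj x b → b = B.suffixPath T 0 := by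
      rw [suffix_L_self]
      rintro _ ⟨j, rfl⟩ hxj
      rw [eq_zero_of_adj_suffixPath hT hx hxw hxj]
    exact ⟨⟨_, ⟨suffixPath_mem_suffix_L 0, hxj⟩, fun b hb => hnb b hb.1 hb.2⟩,
      fun b hb hxb => Or.inl (hnb b hb hxb)⟩
  · rintro x ⟨-, ⟨j, hxj⟩, -⟩
    exact ⟨_, suffixPath_mem_suffix_L j, hxj⟩

end IsWBend

end

theorem stmt_12_general {V : Type*} (G : SimpleGraph V)
    (B : WBendData V) (hB : IsWBend G B) (p : ℕ)
    (hsize : 2 * p + 4 ≤ WBendData.size G B) :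
    ∃ B' : WBendData V, IsUBend G B' ∧ ContainedIn B' B ∧
      p ≤ WBendData.size G B' := by
  obtain ⟨a, T, haT, hT⟩ := hB.exists_links_max
  obtain ⟨b, S, hbS, hS⟩ := hB.reverse.exists_links_max
  have hsize_le :
      B.size G ≤ G.dist (B.p S.rev) (B.p 0) + 4 + G.dist (B.p T) (B.p (Fin.last B.n)) :=
    hB.size_le_of_links (links_reverse.1 hbS) haT
  by_cases hp : p ≤ G.dist (B.p T) (B.p (Fin.last B.n))
  · exact ⟨_, hB.isUBend_suffix haT hT, hB.containedIn_suffix, size_suffix ▸ hp⟩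
  · refine ⟨_, hB.reverse.isUBend_suffix hbS hS, hB.reverse.containedIn_suffix, ?_⟩
    rw [size_reverse_suffix]
    omega

/-- a w-bend of size at least `2p + 4` in a triangle-free graph
contains a u-bend of size at least `p`. -/
theorem stmt_12 {V : Type*} (G : SimpleGraph V) (hTF : G.CliqueFree 3)
    (B : WBendData V) (hB : IsWBend G B) (p : ℕ)
    (hsize : 2 * p + 4 ≤ WBendData.size G B) :
    ∃ B' : WBendData V, IsUBend G B' ∧ ContainedIn B' B ∧
      p ≤ WBendData.size G B' :=
  stmt_12_general G B hB p hsize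
end
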